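/- Let a, b, c be smooth (or analytic) germs at 0 in ℝ^n with a(0)·b(0)·c(0) ≠ 0, and let α, β, γ ∈ ℕ^n be multi-indices such that a(x)x^α − b(x)x^β = c(x)x^γ as germs. Then either α ∈ β + ℕ^n or β ∈ α + ℕ^n (i.e., the multi-indices α and β are comparable in the componentwise partial order). -/
import Mathlib

open Filter Topology

/-- One-variable key lemma: if `f t * t^p = g t * t^q + h t * t^r` near 0 with `p < q, r`,
then `f 0 = 0`. -/
lemma one_var_key (f g h : ℝ → ℝ) (hf : ContinuousAt f 0) (hg : ContinuousAt g 0)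
    (hh : ContinuousAt h 0) (p q r : ℕ) (hpq : p < q) (hpr : p < r)
    (heq : ∀ᶠ t in 𝓝 (0:ℝ), f t * t ^ p = g t * t ^ q + h t * t ^ r) : f 0 = 0 := by
  have h1 : ∀ᶠ t in 𝓝[≠] (0:ℝ), f t = g t * t ^ (q - p) + h t * t ^ (r - p) := by
    filter_upwards [heq.filter_mono nhdsWithin_le_nhds, self_mem_nhdsWithin] with t ht hne
    have h2 : (g t * t ^ (q - p) + h t * t ^ (r - p)) * t ^ p = g t * t ^ q + h t * t ^ r := by
      rw [add_mul, mul_assoc, mul_assoc, ← pow_add, ← pow_add,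
        Nat.sub_add_cancel hpq.le, Nat.sub_add_cancel hpr.le]
    exact mul_right_cancel₀ (pow_ne_zero p hne) (by rw [ht, h2])
  have hlim2 : Tendsto (fun t => g t * t ^ (q - p) + h t * t ^ (r - p)) (𝓝[≠] (0:ℝ))
      (𝓝 (g 0 * (0:ℝ) ^ (q - p) + h 0 * (0:ℝ) ^ (r - p))) :=
    ((hg.mul ((continuous_pow (q - p)).continuousAt)).add
      (hh.mul ((continuous_pow (r - p)).continuousAt))).continuousWithinAt
  have hlim1 : Tendsto f (𝓝[≠] (0:ℝ)) (𝓝 (f 0)) := hf.continuousWithinAt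
  have hval := tendsto_nhds_unique hlim1
    (hlim2.congr' (by filter_upwards [h1] with t ht; exact ht.symm))
  rw [zero_pow (by omega : q - p ≠ 0), zero_pow (by omega : r - p ≠ 0)] at hval
  simpa using hval

lemma prod_pow_w {n : ℕ} (t : ℝ) (w e : Fin n → ℕ) :
    ∏ i, (t ^ w i) ^ e i = t ^ ∑ k, w k * e k := by
  simp_rw [← pow_mul]
  exact Finset.prod_pow_eq_pow_sum _ _ _

/-- Weighted-curve lemma: if `⟨w,α⟩ < ⟨w,β⟩` then `⟨w,γ⟩ = ⟨w,α⟩`. -/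
lemma key_lemma {n : ℕ} (a b c : (Fin n → ℝ) → ℝ) (α β γ : Fin n → ℕ)
    (ha : ContinuousAt a 0) (hb : ContinuousAt b 0) (hc : ContinuousAt c 0)
    (ha0 : a 0 ≠ 0) (hc0 : c 0 ≠ 0)
    (heq : ∀ᶠ x in 𝓝 (0 : Fin n → ℝ),
      a x * ∏ i, x i ^ α i - b x * ∏ i, x i ^ β i = c x * ∏ i, x i ^ γ i)
    (w : Fin n → ℕ) (hw : ∀ k, 1 ≤ w k)
    (hAB : ∑ k, w k * α k < ∑ k, w k * β k) :
    ∑ k, w k * γ k = ∑ k, w k * α k := by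
  set A := ∑ k, w k * α k with hA
  set B := ∑ k, w k * β k with hB
  set C := ∑ k, w k * γ k with hC
  set φ : ℝ → (Fin n → ℝ) := fun t k => t ^ w k with hφ
  have hφ0 : φ 0 = 0 := by
    funext k
    simp [hφ, zero_pow (by have := hw k; omega : w k ≠ 0)]
  have hφc : Continuous φ := continuous_pi fun k => continuous_pow _
  have hT : Tendsto φ (𝓝 (0:ℝ)) (𝓝 (0 : Fin n → ℝ)) := by
    have := hφc.continuousAt (x := (0:ℝ))
    rwa [ContinuousAt, hφ0] at this
  have hE : ∀ᶠ t in 𝓝 (0:ℝ),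
      a (φ t) * t ^ A - b (φ t) * t ^ B = c (φ t) * t ^ C := by
    filter_upwards [hT.eventually heq] with t ht
    simpa [hφ, prod_pow_w, ← hA, ← hB, ← hC] using ht
  have hCa : ContinuousAt (fun t => a (φ t)) 0 := by
    have ha' : ContinuousAt a (φ 0) := by rw [hφ0]; exact ha
    exact ha'.comp hφc.continuousAt
  have hCb : ContinuousAt (fun t => b (φ t)) 0 := by
    have hb' : ContinuousAt b (φ 0) := by rw [hφ0]; exact hb
    exact hb'.comp hφc.continuousAt
  have hCc : ContinuousAt (fun t => c (φ t)) 0 := by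
    have hc' : ContinuousAt c (φ 0) := by rw [hφ0]; exact hc
    exact hc'.comp hφc.continuousAt
  rcases lt_trichotomy C A with hlt | hEq | hgt
  · exfalso
    have : (fun t => c (φ t)) 0 = 0 := by
      apply one_var_key (fun t => c (φ t)) (fun t => a (φ t)) (fun t => -(b (φ t)))
        hCc hCa hCb.neg C A B hlt (hlt.trans hAB)
      filter_upwards [hE] with t ht
      linarith
    have h3 : c (φ 0) = 0 := this
    rw [hφ0] at h3
    exact hc0 h3
  · exact hEq
  · exfalso
    have : (fun t => a (φ t)) 0 = 0 := by
      apply one_var_key (fun t => a (φ t)) (fun t => b (φ t)) (fun t => c (φ t))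
        hCa hCb hCc A B C hAB hgt
      filter_upwards [hE] with t ht
      linarith
    have h3 : a (φ 0) = 0 := this
    rw [hφ0] at h3
    exact ha0 h3

lemma arith_lemma {n : ℕ} (α β γ : Fin n → ℕ) (i : Fin n) (hi : α i < β i)
    (H : ∀ w : Fin n → ℕ, (∀ k, 1 ≤ w k) → ∑ k, w k * α k < ∑ k, w k * β k →
      ∑ k, w k * γ k = ∑ k, w k * α k) : ∀ k, γ k = α k := by
  intro k
  set W : ℕ → ℕ → (Fin n → ℕ) :=
    fun N M m => 1 + (if m = i then N else 0) + (if m = k then M else 0) with hW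
  have hw : ∀ N M m, 1 ≤ W N M m := by
    intro N M m
    exact le_trans (Nat.le_add_right 1 _) (Nat.le_add_right _ _)
  have hsum : ∀ N M (e : Fin n → ℕ),
      ∑ m, W N M m * e m = (∑ m, e m) + N * e i + M * e k := by
    intro N M e
    simp [hW, add_mul, Finset.sum_add_distrib, ite_mul, Finset.sum_ite_eq']
  have hlt : ∀ M N, (∑ m, α m) + M * α k ≤ N →
      ∑ m, W N M m * α m < ∑ m, W N M m * β m := by
    intro M N hN
    rw [hsum, hsum]
    have f1 : N * α i + N ≤ N * β i := by
      have h2 : N * (α i + 1) ≤ N * β i := Nat.mul_le_mul_left N hi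
      rw [mul_add, mul_one] at h2
      exact h2
    have f2 : β i ≤ ∑ m, β m :=
      Finset.single_le_sum (fun m _ => Nat.zero_le _) (Finset.mem_univ i)
    have f3 : 1 ≤ β i := by omega
    have f4 : 0 ≤ M * β k := Nat.zero_le _
    have f5 : 0 ≤ M * α k := Nat.zero_le _
    linarith
  set N := (∑ m, α m) + α k with hN
  have e0 := H (W N 0) (hw N 0) (hlt 0 N (by omega))
  have e1 := H (W N 1) (hw N 1) (hlt 1 N (by omega))
  rw [hsum, hsum] at e0 e1
  simp only [Nat.zero_mul, Nat.one_mul, Nat.add_zero] at e0 e1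
  -- e0 : Sγ + N*γi = Sα + N*αi ; e1 : Sγ + N*γi + γk = Sα + N*αi + αk
  linarith

theorem stmt_2 (n : ℕ) (a b c : (Fin n → ℝ) → ℝ) (α β γ : Fin n → ℕ)
    (ha : ContDiffAt ℝ (⊤ : ℕ∞) a 0) (hb : ContDiffAt ℝ (⊤ : ℕ∞) b 0) (hc : ContDiffAt ℝ (⊤ : ℕ∞) c 0)
    (h0 : a 0 * b 0 * c 0 ≠ 0)
    (heq : ∀ᶠ x in nhds (0 : Fin n → ℝ),
      a x * ∏ i, x i ^ α i - b x * ∏ i, x i ^ β i = c x * ∏ i, x i ^ γ i) :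
    (∀ i, β i ≤ α i) ∨ (∀ i, α i ≤ β i) := by
  have ha0 : a 0 ≠ 0 := fun h => h0 (by simp [h])
  have hb0 : b 0 ≠ 0 := fun h => h0 (by simp [h])
  have hc0 : c 0 ≠ 0 := fun h => h0 (by simp [h])
  by_contra hcon
  push_neg at hcon
  obtain ⟨⟨i, hi⟩, ⟨j, hj⟩⟩ := hcon
  have H1 := key_lemma a b c α β γ ha.continuousAt hb.continuousAt hc.continuousAt
    ha0 hc0 heq
  have H2 := key_lemma b a (fun x => -(c x)) β α γ hb.continuousAt ha.continuousAt
    hc.continuousAt.neg hb0 (by simpa using hc0)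
    (by
      filter_upwards [heq] with x hx
      show b x * ∏ i, x i ^ β i - a x * ∏ i, x i ^ α i = -(c x) * ∏ i, x i ^ γ i
      linarith)
  have hga := arith_lemma α β γ i hi H1 i
  have hgb := arith_lemma β α γ j hj H2 i
  omega
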